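/- arXiv:1208.6337 — 7 statements merged into one kernel-verified Lean document; each statement's English description precedes it below -/
import Mathlib

section
/- Let A be a unital C*-algebra and let N₁, N₂ ∈ A be normal elements such that N₁ lies in the norm closure of the similarity orbit of N₂ (i.e., there exist invertible elements Vₙ ∈ A with ‖N₁ - Vₙ N₂ Vₙ⁻¹‖ → 0). If λ ∉ spectrum(N₁) and λ·1 - N₂ lies in the connected component of the identity in the group of invertible elements of A, then λ·1 - N₁ also lies in the connected component of the identity in the group of invertible elements of A. -/
/-- If a normal element `N₁` lies in the norm closure of the similarity orbit of a normal
element `N₂` in a unital C*-algebra, `z ∉ spectrum N₁`, and `z•1 - N₂` lies in the connected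
component of the identity of the invertibles, then so does `z•1 - N₁`. -/
theorem stmt0 {A : Type*} [NormedRing A] [StarRing A] [CStarRing A] [CompleteSpace A]
    [NormedAlgebra ℂ A] [StarModule ℂ A]
    (N₁ N₂ : A) (hN₁ : IsStarNormal N₁) (hN₂ : IsStarNormal N₂)
    (h : N₁ ∈ closure {x : A | ∃ V : Aˣ, x = ↑V * N₂ * ↑V⁻¹})
    (z : ℂ) (hz : z ∉ spectrum ℂ N₁)
    (u : Aˣ) (hu : (u : A) = z • (1 : A) - N₂) (hu0 : u ∈ connectedComponent (1 : Aˣ)) :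
    ∃ v : Aˣ, (v : A) = z • (1 : A) - N₁ ∧ v ∈ connectedComponent (1 : Aˣ) := by
  rw [spectrum.notMem_iff, Algebra.algebraMap_eq_smul_one] at hz
  obtain ⟨v, hv⟩ := hz
  refine ⟨v, hv, ?_⟩
  -- get a sequence in the orbit converging to N₁
  obtain ⟨f, hf_mem, hf_lim⟩ := mem_closure_iff_seq_limit.mp h
  choose V hV using hf_mem
  -- the conjugated units
  set w : ℕ → Aˣ := fun n => V n * u * (V n)⁻¹ with hw
  have hwval : ∀ n, ((w n : A)) = z • (1 : A) - f n := by
    intro n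
    simp only [hw, Units.val_mul, hu, hV n]
    rw [mul_sub, sub_mul]
    congr 1
    rw [mul_smul_comm, mul_one, smul_mul_assoc, Units.mul_inv]
  -- convergence in Aˣ
  have hval_lim : Filter.Tendsto (fun n => (w n : A)) Filter.atTop (nhds (v : A)) := by
    simp only [hwval, hv]
    exact (tendsto_const_nhds.sub hf_lim)
  have hlim : Filter.Tendsto w Filter.atTop (nhds v) := by
    rw [Units.isOpenEmbedding_val.isEmbedding.tendsto_nhds_iff]
    exact hval_lim
  -- each w n lies in the connected component of 1
  have hwcc : ∀ n, w n ∈ connectedComponent (1 : Aˣ) := by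
    intro n
    have hc : Continuous (fun g : Aˣ => V n * g * (V n)⁻¹) := by
      continuity
    have himg : IsConnected ((fun g : Aˣ => V n * g * (V n)⁻¹) '' connectedComponent 1) :=
      isConnected_connectedComponent.image _ hc.continuousOn
    have h1 : (1 : Aˣ) ∈ (fun g : Aˣ => V n * g * (V n)⁻¹) '' connectedComponent 1 :=
      ⟨1, mem_connectedComponent, by simp⟩
    have := himg.subset_connectedComponent h1
    exact this ⟨u, hu0, rfl⟩
  exact isClosed_connectedComponent.mem_of_tendsto hlim
    (Filter.Eventually.of_forall hwcc)
end

section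
/- Let A be a unital C*-algebra, let N ∈ A be a normal element, let U ⊆ ℂ be an open set with U ∩ spectrum(N) ≠ ∅, and let (Nₙ) be a sequence of normal elements of A converging in norm to N. Then there exists k ∈ ℕ such that spectrum(Nₙ) ∩ U ≠ ∅ for all n ≥ k. -/
/-!
For a normal element `a`, the norm of `(z - a)⁻¹` equals its spectral radius, which is
`1 / dist(z, σ(a))`. So if `σ(a)` avoids the `ε`-ball around `z` and `‖a - b‖ < ε`, then `z - b`
differs from the invertible `z - a` by less than `‖(z - a)⁻¹‖⁻¹`, hence is invertible: `z ∉ σ(b)`.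
Applied with `a = Nₙ` and `b = N`, a point of `U ∩ σ(N)` forces `σ(Nₙ)` into `U` once
`‖Nₙ - N‖` is below the radius of a ball around that point inside `U`.
-/

theorem isStarNormal_algebraMap_sub {R A : Type*} [CommSemiring R] [StarRing R] [Ring A]
    [StarRing A] [Algebra R A] [StarModule R A] (r : R) (a : A) [IsStarNormal a] :
    IsStarNormal (algebraMap R A r - a) := by
  rw [Algebra.algebraMap_eq_smul_one]
  exact ((Commute.one_left _).smul_left r).isStarNormal_sub

section CStarAlgebra

variable {A : Type*} [CStarAlgebra A]

theorem IsStarNormal.norm_inv_le_of_le_norm (u : Aˣ) [IsStarNormal (u : A)] {ε : ℝ}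
    (hε : 0 < ε) (h : ∀ μ ∈ spectrum ℂ (u : A), ε ≤ ‖μ‖) : ‖(↑u⁻¹ : A)‖ ≤ ε⁻¹ := by
  rcases subsingleton_or_nontrivial A with _ | _
  · rw [Subsingleton.elim (↑u⁻¹ : A) 0, norm_zero]
    positivity
  obtain ⟨ν, hν, hν_norm⟩ := spectrum.exists_nnnorm_eq_spectralRadius (↑u⁻¹ : A)
  rw [IsStarNormal.spectralRadius_eq_nnnorm, ENNReal.coe_inj] at hν_norm
  rw [← spectrum.map_inv, Set.mem_inv] at hν
  rw [← coe_nnnorm, ← hν_norm, coe_nnnorm, ← inv_inv ν, norm_inv]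
  exact inv_anti₀ hε (h _ hν)

theorem IsStarNormal.exists_mem_spectrum_dist_lt {a b : A} [IsStarNormal a] {ε : ℝ}
    (hab : dist a b < ε) {z : ℂ} (hz : z ∈ spectrum ℂ b) :
    ∃ μ ∈ spectrum ℂ a, dist μ z < ε := by
  rcases subsingleton_or_nontrivial A with _ | _
  · simp [spectrum.of_subsingleton] at hz
  by_contra! hfar
  have hε : 0 < ε := dist_nonneg.trans_lt hab
  have hza : z ∉ spectrum ℂ a := fun hz' => (hfar z hz').not_gt (by simpa using hε)
  obtain ⟨u, hu⟩ := spectrum.notMem_iff.mp hza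
  have : IsStarNormal (u : A) := hu ▸ isStarNormal_algebraMap_sub z a
  have hu_inv : ‖(↑u⁻¹ : A)‖ ≤ ε⁻¹ := by
    refine IsStarNormal.norm_inv_le_of_le_norm u hε fun ν hν => ?_
    rw [hu, ← spectrum.singleton_sub_eq] at hν
    obtain ⟨_, rfl, μ, hμ, rfl⟩ := hν
    simpa [dist_eq_norm'] using hfar μ hμ
  have hnear : ‖(algebraMap ℂ A z - b) - u‖ < ‖(↑u⁻¹ : A)‖⁻¹ := by
    calc ‖(algebraMap ℂ A z - b) - u‖ = dist a b := by
          rw [hu, dist_eq_norm]; congr 1; abel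
      _ < ε := hab
      _ ≤ ‖(↑u⁻¹ : A)‖⁻¹ := by
          have : 0 < ‖(↑u⁻¹ : A)‖ := norm_pos_iff.mpr u⁻¹.ne_zero
          exact (le_inv_comm₀ hε this).mpr hu_inv
  exact spectrum.mem_iff.mp hz (u.ofNearby _ hnear).isUnit

end CStarAlgebra

theorem stmt1_general {A : Type*} [NormedRing A] [StarRing A] [CStarRing A] [CompleteSpace A]
    [NormedAlgebra ℂ A] [StarModule ℂ A]
    (N : A) (U : Set ℂ) (hU : IsOpen U)
    (hne : (U ∩ spectrum ℂ N).Nonempty)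
    (Ns : ℕ → A) (hNs : ∀ n, IsStarNormal (Ns n))
    (hconv : Filter.Tendsto Ns Filter.atTop (nhds N)) :
    ∃ k : ℕ, ∀ n ≥ k, (spectrum ℂ (Ns n) ∩ U).Nonempty := by
  let : CStarAlgebra A := { }
  obtain ⟨z, hzU, hzN⟩ := hne
  obtain ⟨ε, hε, hball⟩ := Metric.isOpen_iff.mp hU z hzU
  obtain ⟨k, hk⟩ := Filter.eventually_atTop.mp (hconv.eventually (Metric.ball_mem_nhds N hε))
  refine ⟨k, fun n hn => ?_⟩
  have := hNs n
  obtain ⟨μ, hμ, hμz⟩ := IsStarNormal.exists_mem_spectrum_dist_lt (hk n hn) hzN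
  exact ⟨μ, hμ, hball hμz⟩

/-- If normal elements `Ns n` converge in norm to a normal element `N` in a unital C*-algebra,
and `U` is open with `U ∩ spectrum N ≠ ∅`, then eventually `spectrum (Ns n) ∩ U ≠ ∅`. -/
theorem stmt1 {A : Type*} [NormedRing A] [StarRing A] [CStarRing A] [CompleteSpace A]
    [NormedAlgebra ℂ A] [StarModule ℂ A]
    (N : A) (hN : IsStarNormal N) (U : Set ℂ) (hU : IsOpen U)
    (hne : (U ∩ spectrum ℂ N).Nonempty)
    (Ns : ℕ → A) (hNs : ∀ n, IsStarNormal (Ns n))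
    (hconv : Filter.Tendsto Ns Filter.atTop (nhds N)) :
    ∃ k : ℕ, ∀ n ≥ k, (spectrum ℂ (Ns n) ∩ U).Nonempty :=
  stmt1_general N U hU hne Ns hNs hconv
end

section
/- Let A be a unital C*-algebra, n ∈ ℕ, λ₁, ..., λₙ distinct complex scalars, {Pⱼ}ⱼ₌₁ⁿ nonzero pairwise orthogonal projections in A summing to the identity, and {A_{i,j}} ⊆ A elements with A_{i,j} = 0 whenever i ≥ j and Pᵢ A_{i,j} Pⱼ = A_{i,j} for i < j. Then the 'upper triangular' element Σⱼ λⱼ Pⱼ + Σ_{i,j} A_{i,j} is similar in A to the 'diagonal' element Σⱼ λⱼ Pⱼ. -/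
/-- Auxiliary: the components of the similarity transform, defined by recursion solving
the Sylvester equation componentwise. -/
noncomputable def sAux {A : Type*} [Ring A] [Algebra ℂ A] {n : ℕ} (lam : Fin n → ℂ)
    (M : Fin n → Fin n → A) (i j : Fin n) : A :=
  if i < j then
    (lam i - lam j)⁻¹ • (M i j + ∑ k ∈ (Finset.Iio j).attach, sAux lam M i k.1 * M k.1 j)
  else 0
  termination_by j.1
  decreasing_by
    have hk : (k.1 : Fin n) < j := Finset.mem_Iio.mp k.2
    rw [Fin.lt_def] at hk
    omega

theorem sAux_def {A : Type*} [Ring A] [Algebra ℂ A] {n : ℕ} (lam : Fin n → ℂ)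
    (M : Fin n → Fin n → A) (i j : Fin n) :
    sAux lam M i j =
      if i < j then
        (lam i - lam j)⁻¹ • (M i j + ∑ k ∈ (Finset.Iio j).attach, sAux lam M i k.1 * M k.1 j)
      else 0 := by
  rw [sAux.eq_def]

/-- An "upper triangular" element with respect to a finite family of nonzero pairwise orthogonal
projections summing to the identity, with distinct diagonal scalars, is similar to its
"diagonal" part. -/
theorem stmt4 {A : Type*} [NormedRing A] [StarRing A] [CStarRing A] [CompleteSpace A]
    [NormedAlgebra ℂ A] [StarModule ℂ A]
    (n : ℕ) (lam : Fin n → ℂ) (hlam : Function.Injective lam)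
    (P : Fin n → A)
    (hPsa : ∀ j, IsSelfAdjoint (P j)) (hPidem : ∀ j, IsIdempotentElem (P j))
    (hPne : ∀ j, P j ≠ 0)
    (horth : ∀ i j, i ≠ j → P i * P j = 0)
    (hsum : ∑ j, P j = 1)
    (M : Fin n → Fin n → A)
    (hMzero : ∀ i j, j ≤ i → M i j = 0)
    (hMcomp : ∀ i j, i < j → P i * M i j * P j = M i j) :
    ∃ T : Aˣ, ↑T * ((∑ j, lam j • P j) + ∑ i, ∑ j, M i j) * ↑T⁻¹ = ∑ j, lam j • P j := by
  classical
  set s : Fin n → Fin n → A := sAux lam M with hs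
  -- uniform component property of M
  have hMc : ∀ i j, P i * M i j * P j = M i j := by
    intro i j
    rcases lt_or_ge i j with h | h
    · exact hMcomp i j h
    · rw [hMzero i j h, mul_zero, zero_mul]
  -- vanishing of s off the strictly upper triangle
  have hs0 : ∀ i j, ¬ i < j → s i j = 0 := by
    intro i j h
    rw [hs, sAux_def, if_neg h]
  -- component property of s
  have hcompAux : ∀ (m : ℕ) (j i : Fin n), j.1 < m → P i * s i j * P j = s i j := by
    intro m
    induction m with
    | zero => intro j i h; exact absurd h (Nat.not_lt_zero _)
    | succ m ih =>
      intro j i hj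
      by_cases h : i < j
      · have e1 : s i j = (lam i - lam j)⁻¹ •
            (M i j + ∑ k ∈ (Finset.Iio j).attach, s i k.1 * M k.1 j) := by
          rw [hs, sAux_def, if_pos h]
        rw [e1, mul_smul_comm, smul_mul_assoc]
        congr 1
        rw [mul_add, add_mul]
        congr 1
        · exact hMcomp i j h
        · rw [Finset.mul_sum, Finset.sum_mul]
          refine Finset.sum_congr rfl fun k _ => ?_
          have hk : k.1 < j := Finset.mem_Iio.mp k.2
          have hkm : (k.1 : Fin n).1 < m := lt_of_lt_of_le hk (Nat.lt_succ_iff.mp hj)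
          have hik : P i * s i k.1 = s i k.1 := by
            calc P i * s i k.1 = P i * (P i * s i k.1 * P k.1) := by rw [ih k.1 i hkm]
              _ = (P i * P i) * s i k.1 * P k.1 := by noncomm_ring
              _ = P i * s i k.1 * P k.1 := by rw [(hPidem i).eq]
              _ = s i k.1 := ih k.1 i hkm
          have hkj : M k.1 j * P j = M k.1 j := by
            calc M k.1 j * P j = (P k.1 * M k.1 j * P j) * P j := by rw [hMc]
              _ = P k.1 * M k.1 j * (P j * P j) := by noncomm_ring
              _ = P k.1 * M k.1 j * P j := by rw [(hPidem j).eq]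
              _ = M k.1 j := hMc _ _
          calc P i * (s i k.1 * M k.1 j) * P j
              = (P i * s i k.1) * (M k.1 j * P j) := by noncomm_ring
            _ = s i k.1 * M k.1 j := by rw [hik, hkj]
      · rw [hs0 i j h, mul_zero, zero_mul]
  have hcomp : ∀ i j, P i * s i j * P j = s i j := fun i j =>
    hcompAux (j.1 + 1) j i (Nat.lt_succ_self _)
  -- left/right multiplication by projections on components
  have hPmul : ∀ (l i j : Fin n), P l * s i j = if l = i then s i j else 0 := by
    intro l i j
    conv_lhs => rw [← hcomp i j]
    by_cases h : l = i
    · subst h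
      rw [if_pos rfl]
      calc P l * (P l * s l j * P j) = (P l * P l) * s l j * P j := by noncomm_ring
        _ = P l * s l j * P j := by rw [(hPidem l).eq]
        _ = s l j := hcomp l j
    · rw [if_neg h]
      calc P l * (P i * s i j * P j) = (P l * P i) * (s i j * P j) := by noncomm_ring
        _ = 0 := by rw [horth l i h, zero_mul]
  have hmulP : ∀ (l i j : Fin n), s i j * P l = if l = j then s i j else 0 := by
    intro l i j
    conv_lhs => rw [← hcomp i j]
    by_cases h : l = j
    · subst h
      rw [if_pos rfl]
      calc (P i * s i l * P l) * P l = P i * s i l * (P l * P l) := by noncomm_ring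
        _ = P i * s i l * P l := by rw [(hPidem l).eq]
        _ = s i l := hcomp i l
    · rw [if_neg h]
      calc (P i * s i j * P j) * P l = (P i * s i j) * (P j * P l) := by noncomm_ring
        _ = 0 := by rw [horth j l (fun hh => h hh.symm), mul_zero]
  -- s * M orthogonality
  have hsM : ∀ (i k k' j : Fin n), k ≠ k' → s i k * M k' j = 0 := by
    intro i k k' j hkk
    conv_lhs => rw [← hcomp i k, ← hMc k' j]
    calc (P i * s i k * P k) * (P k' * M k' j * P j)
        = (P i * s i k) * ((P k * P k') * (M k' j * P j)) := by noncomm_ring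
      _ = 0 := by rw [horth k k' hkk, zero_mul, mul_zero]
  -- the componentwise Sylvester equation
  have hsyl : ∀ i j, (lam i - lam j) • s i j = M i j + ∑ k, s i k * M k j := by
    intro i j
    by_cases h : i < j
    · have hne : lam i - lam j ≠ 0 := sub_ne_zero.mpr (fun he => (ne_of_lt h) (hlam he))
      rw [hs, sAux_def, if_pos h, smul_smul, mul_inv_cancel₀ hne, one_smul]
      congr 1
      rw [← hs]
      rw [Finset.sum_attach (Finset.Iio j) (fun k => s i k * M k j)]
      refine Finset.sum_subset (Finset.subset_univ _) fun k _ hk => ?_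
      rw [hMzero k j (le_of_not_gt (fun hh => hk (Finset.mem_Iio.mpr hh))), mul_zero]
    · rw [hs0 i j h, smul_zero, hMzero i j (le_of_not_gt h), zero_add]
      refine (Finset.sum_eq_zero fun k _ => ?_).symm
      rcases lt_or_ge k j with hk | hk
      · have : ¬ i < k := fun hik => h (hik.trans hk)
        rw [hs0 i k this, zero_mul]
      · rw [hMzero k j hk, mul_zero]
  set D : A := ∑ j, lam j • P j with hD
  set N : A := ∑ i, ∑ j, M i j with hN
  set S : A := ∑ i, ∑ j, s i j with hS
  -- D acting on components
  have hDs : ∀ i j, D * s i j = lam i • s i j := by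
    intro i j
    rw [hD, Finset.sum_mul]
    have h1 : ∀ k, (lam k • P k) * s i j = if k = i then lam i • s i j else 0 := by
      intro k
      rw [smul_mul_assoc, hPmul k i j]
      by_cases h : k = i
      · rw [if_pos h, if_pos h, h]
      · rw [if_neg h, if_neg h, smul_zero]
    simp only [h1]
    simp [Finset.sum_ite_eq' Finset.univ i (fun _ => lam i • s i j)]
  have hsD : ∀ i j, s i j * D = lam j • s i j := by
    intro i j
    rw [hD, Finset.mul_sum]
    have h1 : ∀ k, s i j * (lam k • P k) = if k = j then lam j • s i j else 0 := by
      intro k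
      rw [mul_smul_comm, hmulP k i j]
      by_cases h : k = j
      · rw [if_pos h, if_pos h, h]
      · rw [if_neg h, if_neg h, smul_zero]
    simp only [h1]
    simp [Finset.sum_ite_eq' Finset.univ j (fun _ => lam j • s i j)]
  -- main computation : D*S - S*D = N + S*N
  have hDS : D * S = ∑ i, ∑ j, lam i • s i j := by
    rw [hS, Finset.mul_sum]
    refine Finset.sum_congr rfl fun i _ => ?_
    rw [Finset.mul_sum]
    exact Finset.sum_congr rfl fun j _ => hDs i j
  have hSD : S * D = ∑ i, ∑ j, lam j • s i j := by
    rw [hS, Finset.sum_mul]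
    refine Finset.sum_congr rfl fun i _ => ?_
    rw [Finset.sum_mul]
    exact Finset.sum_congr rfl fun j _ => hsD i j
  have hR : D * S - S * D = ∑ i, ∑ j, (M i j + ∑ k, s i k * M k j) := by
    rw [hDS, hSD, ← Finset.sum_sub_distrib]
    refine Finset.sum_congr rfl fun i _ => ?_
    rw [← Finset.sum_sub_distrib]
    refine Finset.sum_congr rfl fun j _ => ?_
    rw [← sub_smul, hsyl]
  have hSN : S * N = ∑ i, ∑ j, ∑ k, s i k * M k j := by
    rw [hS, Finset.sum_mul]
    refine Finset.sum_congr rfl fun i _ => ?_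
    rw [Finset.sum_mul]
    have h1 : ∀ k : Fin n, s i k * N = ∑ j, s i k * M k j := by
      intro k
      rw [hN, Finset.mul_sum]
      rw [Finset.sum_eq_single k]
      · rw [Finset.mul_sum]
      · intro k' _ hk'
        rw [Finset.mul_sum]
        exact Finset.sum_eq_zero fun j _ => hsM i k k' j (fun h => hk' h.symm)
      · intro h; exact absurd (Finset.mem_univ k) h
    simp only [h1]
    exact Finset.sum_comm
  have hmain : D * S - S * D = N + S * N := by
    rw [hR, hSN, hN, ← Finset.sum_add_distrib]
    exact Finset.sum_congr rfl fun i _ => Finset.sum_add_distrib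
  -- nilpotency of S
  have hQs : ∀ (m : ℕ) (i j : Fin n),
      (∑ l ∈ Finset.univ.filter (fun l : Fin n => m ≤ l.1), P l) * s i j
        = if m ≤ i.1 then s i j else 0 := by
    intro m i j
    rw [Finset.sum_mul]
    have h1 : ∀ l, P l * s i j = if l = i then s i j else 0 := fun l => hPmul l i j
    simp only [h1]
    rw [Finset.sum_ite_eq' _ i (fun _ => s i j)]
    simp [Finset.mem_filter]
  have hsQ : ∀ (m : ℕ) (i j : Fin n),
      s i j * (∑ l ∈ Finset.univ.filter (fun l : Fin n => m ≤ l.1), P l)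
        = if m ≤ j.1 then s i j else 0 := by
    intro m i j
    rw [Finset.mul_sum]
    have h1 : ∀ l, s i j * P l = if l = j then s i j else 0 := fun l => hmulP l i j
    simp only [h1]
    rw [Finset.sum_ite_eq' _ j (fun _ => s i j)]
    simp [Finset.mem_filter]
  have hQS : ∀ m : ℕ,
      (∑ l ∈ Finset.univ.filter (fun l : Fin n => m ≤ l.1), P l) * S
        = ∑ i, ∑ j, (if m ≤ i.1 then s i j else 0) := by
    intro m
    rw [hS, Finset.mul_sum]
    refine Finset.sum_congr rfl fun i _ => ?_
    rw [Finset.mul_sum]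
    exact Finset.sum_congr rfl fun j _ => hQs m i j
  have hQSQ : ∀ m : ℕ,
      ((∑ l ∈ Finset.univ.filter (fun l : Fin n => m ≤ l.1), P l) * S)
          * (∑ l ∈ Finset.univ.filter (fun l : Fin n => m + 1 ≤ l.1), P l)
        = (∑ l ∈ Finset.univ.filter (fun l : Fin n => m ≤ l.1), P l) * S := by
    intro m
    rw [hQS m, Finset.sum_mul]
    refine Finset.sum_congr rfl fun i _ => ?_
    rw [Finset.sum_mul]
    refine Finset.sum_congr rfl fun j _ => ?_
    by_cases h : m ≤ i.1
    · rw [if_pos h, hsQ (m + 1) i j]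
      by_cases hj : m + 1 ≤ j.1
      · rw [if_pos hj]
      · rw [if_neg hj, hs0 i j (by rw [Fin.lt_def]; omega)]
    · rw [if_neg h, zero_mul]
  have hpow : ∀ m : ℕ,
      S ^ m * (∑ l ∈ Finset.univ.filter (fun l : Fin n => m ≤ l.1), P l) = S ^ m := by
    intro m
    induction m with
    | zero =>
      rw [pow_zero, one_mul, Finset.filter_true_of_mem fun j _ => Nat.zero_le _]
      exact hsum
    | succ m ih =>
      calc S ^ (m + 1) * (∑ l ∈ Finset.univ.filter (fun l : Fin n => m + 1 ≤ l.1), P l)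
          = (S ^ m * (∑ l ∈ Finset.univ.filter (fun l : Fin n => m ≤ l.1), P l)) *
              (S * (∑ l ∈ Finset.univ.filter (fun l : Fin n => m + 1 ≤ l.1), P l)) := by
            rw [ih, pow_succ, mul_assoc]
        _ = S ^ m * (((∑ l ∈ Finset.univ.filter (fun l : Fin n => m ≤ l.1), P l) * S) *
              (∑ l ∈ Finset.univ.filter (fun l : Fin n => m + 1 ≤ l.1), P l)) := by
            noncomm_ring
        _ = S ^ m * ((∑ l ∈ Finset.univ.filter (fun l : Fin n => m ≤ l.1), P l) * S) := by
            rw [hQSQ m]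
        _ = (S ^ m * (∑ l ∈ Finset.univ.filter (fun l : Fin n => m ≤ l.1), P l)) * S := by
            rw [mul_assoc]
        _ = S ^ (m + 1) := by rw [ih, pow_succ]
  have hSn : S ^ n = 0 := by
    rw [← hpow n, Finset.filter_false_of_mem fun j _ => not_le.mpr j.2, Finset.sum_empty,
      mul_zero]
  have hnil : IsNilpotent S := ⟨n, hSn⟩
  obtain ⟨u, hu⟩ := hnil.isUnit_one_add
  refine ⟨u, ?_⟩
  rw [Units.mul_inv_eq_iff_eq_mul, hu]
  have hDS' : D * S = N + S * N + S * D := by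
    rw [← hmain]; abel
  rw [add_mul, one_mul, mul_add, mul_add, mul_one, hDS']
  abel
end

section
/- Let A be a unital C*-algebra and let N₁, N₂ ∈ A be normal elements. Then the distance between their unitary orbits is at least the Hausdorff distance between their spectra: inf{‖U N₁ U* - V N₂ V*‖ : U, V unitary in A} ≥ d_H(spectrum(N₁), spectrum(N₂)). -/
/-!
Unitary conjugation preserves both normality and the spectrum, so it suffices to show
`d_H(σ a, σ b) ≤ ‖a - b‖` for normal `a`, `b`. If `z ∈ σ b \ σ a`, the resolvent `(z - a)⁻¹` is
again normal, so its norm equals its spectral radius `1 / dist(z, σ a)`; were `‖a - b‖` smaller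
than `dist(z, σ a)`, then `z - b` would be a small perturbation of the unit `z - a`, hence a unit.
-/

open Metric

lemma spectrum.inv_norm_inv_le_norm_sub {A : Type*} [NormedRing A] [NormedAlgebra ℂ A]
    [HasSummableGeomSeries A] {a b : A} {c : Aˣ} {z : ℂ} (hc : (c : A) = algebraMap ℂ A z - a)
    (hz : z ∈ spectrum ℂ b) : ‖(↑c⁻¹ : A)‖⁻¹ ≤ ‖a - b‖ := by
  by_contra! h
  refine spectrum.mem_iff.mp hz (c.ofNearby (algebraMap ℂ A z - b) ?_).isUnit
  rwa [hc, sub_sub_sub_cancel_left]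

section CStarAlgebra

variable {A : Type*} [CStarAlgebra A]

instance IsStarNormal.algebraMap_sub (z : ℂ) (a : A) [IsStarNormal a] :
    IsStarNormal (algebraMap ℂ A z - a) :=
  have : IsStarNormal (algebraMap ℂ A z) := IsStarNormal.map (StarAlgHom.ofId ℂ A) z
  (Algebra.commute_algebraMap_left z (star a)).isStarNormal_sub

lemma IsStarNormal.unitary_mul_mul_star {u : A} (hu : u ∈ unitary A) (a : A) [IsStarNormal a] :
    IsStarNormal (u * a * star u) :=
  IsStarNormal.map (Unitary.conjStarAlgAut ℂ A ⟨u, hu⟩) a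

lemma IsStarNormal.norm_le_of_forall_mem_spectrum {a : A} [IsStarNormal a] {r : ℝ} (hr : 0 ≤ r)
    (h : ∀ μ ∈ spectrum ℂ a, ‖μ‖ ≤ r) : ‖a‖ ≤ r := by
  lift r to NNReal using hr
  have : spectralRadius ℂ a ≤ r := iSup₂_le fun μ hμ => by exact_mod_cast h μ hμ
  rw [IsStarNormal.spectralRadius_eq_nnnorm] at this
  exact_mod_cast this

lemma IsStarNormal.infDist_spectrum_le_inv_norm_inv {a : A} [IsStarNormal a] {c : Aˣ} {z : ℂ}
    (hc : (c : A) = algebraMap ℂ A z - a) : infDist z (spectrum ℂ a) ≤ ‖(↑c⁻¹ : A)‖⁻¹ := by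
  nontriviality A
  have hd : 0 < infDist z (spectrum ℂ a) :=
    (spectrum.isClosed a).notMem_iff_infDist_pos (spectrum.nonempty a) |>.mp
      (spectrum.notMem_iff.mpr (hc ▸ c.isUnit))
  have : IsStarNormal (c : A) := hc ▸ inferInstance
  rw [le_inv_comm₀ hd (norm_pos_iff.mpr c⁻¹.ne_zero)]
  refine IsStarNormal.norm_le_of_forall_mem_spectrum (inv_nonneg.mpr hd.le) fun μ hμ => ?_
  rw [← spectrum.map_inv, Set.mem_inv, hc, ← spectrum.singleton_sub_eq,
    Set.singleton_sub] at hμ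
  obtain ⟨w, hw, hμw⟩ := hμ
  have hμ : infDist z (spectrum ℂ a) ≤ ‖μ‖⁻¹ := by
    simpa [← norm_inv, ← hμw, dist_eq_norm] using infDist_le_dist_of_mem hw
  exact (le_inv_comm₀ hd (inv_pos.mp (hd.trans_le hμ))).mp hμ

lemma IsStarNormal.infDist_spectrum_le_norm_sub {a b : A} [IsStarNormal a] {z : ℂ}
    (hz : z ∈ spectrum ℂ b) : infDist z (spectrum ℂ a) ≤ ‖a - b‖ := by
  by_cases hza : z ∈ spectrum ℂ a
  · simp [infDist_zero_of_mem hza]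
  obtain ⟨c, hc⟩ := spectrum.notMem_iff.mp hza
  exact (infDist_spectrum_le_inv_norm_inv hc).trans (spectrum.inv_norm_inv_le_norm_sub hc hz)

lemma hausdorffDist_spectrum_le_norm_sub (a b : A) [IsStarNormal a] [IsStarNormal b] :
    hausdorffDist (spectrum ℂ a) (spectrum ℂ b) ≤ ‖a - b‖ := by
  refine hausdorffDist_le_of_infDist (norm_nonneg _) (fun z hz => ?_) (fun z hz => ?_)
  · rw [norm_sub_rev]
    exact IsStarNormal.infDist_spectrum_le_norm_sub hz
  · exact IsStarNormal.infDist_spectrum_le_norm_sub hz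

end CStarAlgebra

/-- The distance between the unitary orbits of two normal elements of a unital C*-algebra is
at least the Hausdorff distance between their spectra: every pair of elements of the two
unitary orbits is at distance at least `d_H(spectrum N₁, spectrum N₂)`. -/
theorem stmt8 {A : Type*} [NormedRing A] [StarRing A] [CStarRing A] [CompleteSpace A]
    [NormedAlgebra ℂ A] [StarModule ℂ A]
    (N₁ N₂ : A) (hN₁ : IsStarNormal N₁) (hN₂ : IsStarNormal N₂) :
    ∀ u ∈ unitary A, ∀ v ∈ unitary A,
      Metric.hausdorffDist (spectrum ℂ N₁) (spectrum ℂ N₂) ≤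
        ‖u * N₁ * star u - v * N₂ * star v‖ := by
  intro u hu v hv
  let _ : CStarAlgebra A := {}
  have _ : IsStarNormal (u * N₁ * star u) := .unitary_mul_mul_star hu N₁
  have _ : IsStarNormal (v * N₂ * star v) := .unitary_mul_mul_star hv N₂
  rw [← Unitary.spectrum_star_right_conjugate (a := N₁) (U := ⟨u, hu⟩),
    ← Unitary.spectrum_star_right_conjugate (a := N₂) (U := ⟨v, hv⟩)]
  exact hausdorffDist_spectrum_le_norm_sub _ _
end

section
/- Let A be a unital C*-algebra in which any two nonzero projections are Murray-von Neumann equivalent, and let N₁, N₂ ∈ A be normal elements with finite spectra satisfying spectrum(N₁) = spectrum(N₂). Then N₁ and N₂ are approximately unitarily equivalent: for every ε > 0 there is a unitary U ∈ A with ‖N₁ - U N₂ U*‖ < ε. -/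
/-!
Functional calculus with the indicator functions of the points `λ` of the common finite spectrum
writes `N₁ = ∑ λ • Pλ` and `N₂ = ∑ λ • Qλ` with two resolutions of the identity `(Pλ)`, `(Qλ)`
indexed by the same set, all of whose members are nonzero. The hypothesis gives partial isometries
`vλ` with `star vλ * vλ = Qλ` and `vλ * star vλ = Pλ`; orthogonality of the two families makes
`u = ∑ vλ` a unitary with `u * Qλ * star u = Pλ`, hence `u * N₂ * star u = N₁` exactly.
-/

open Finset

section PartialIsometry

variable {R : Type*} [NonUnitalNormedRing R] [StarRing R] [CStarRing R] {v p : R}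

lemma mul_eq_self_of_star_mul_self_eq (hp : IsStarProjection p) (h : star v * v = p) :
    v * p = v := by
  have hpp : p * p = p := hp.isIdempotentElem
  have : star (v * p - v) * (v * p - v) = 0 := by
    calc star (v * p - v) * (v * p - v)
        = p * (star v * v) * p - p * (star v * v) - star v * v * p + star v * v := by
          simp only [star_sub, star_mul, hp.isSelfAdjoint.star_eq]
          noncomm_ring
      _ = 0 := by rw [h, hpp, hpp]; abel
  exact sub_eq_zero.mp (CStarRing.star_mul_self_eq_zero_iff _ |>.mp this)

lemma mul_eq_self_of_mul_star_self_eq (hp : IsStarProjection p) (h : v * star v = p) :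
    p * v = v := by
  simpa [hp.isSelfAdjoint.star_eq] using
    congr(star $(mul_eq_self_of_star_mul_self_eq (v := star v) hp (by simpa using h)))

lemma star_mul_eq_zero_of_mul_star_self_eq {w q : R} (hp : IsStarProjection p)
    (hq : IsStarProjection q) (hv : v * star v = p) (hw : w * star w = q) (hpq : p * q = 0) :
    star v * w = 0 := by
  rw [← mul_eq_self_of_mul_star_self_eq hp hv, ← mul_eq_self_of_mul_star_self_eq hq hw,
    star_mul, hp.isSelfAdjoint.star_eq, mul_assoc, ← mul_assoc p, hpq, zero_mul, mul_zero]

lemma mul_star_eq_zero_of_star_mul_self_eq {w q : R} (hp : IsStarProjection p)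
    (hq : IsStarProjection q) (hv : star v * v = p) (hw : star w * w = q) (hpq : p * q = 0) :
    v * star w = 0 := by
  simpa using star_mul_eq_zero_of_mul_star_self_eq (v := star v) (w := star w) hp hq
    (by simpa using hv) (by simpa using hw) hpq

end PartialIsometry

structure IsResolutionOfIdentity {ι R : Type*} [Ring R] [StarRing R] (s : Finset ι)
    (p : ι → R) : Prop where
  isStarProjection : ∀ i ∈ s, IsStarProjection (p i)
  mul_eq_zero : ∀ i ∈ s, ∀ j ∈ s, i ≠ j → p i * p j = 0
  sum_eq_one : ∑ i ∈ s, p i = 1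

namespace IsResolutionOfIdentity

variable {ι R : Type*} [NormedRing R] [StarRing R] [CStarRing R] {s : Finset ι} {p q v : ι → R}

theorem sum_mem_unitary (hp : IsResolutionOfIdentity s p) (hq : IsResolutionOfIdentity s q)
    (hvq : ∀ i ∈ s, star (v i) * v i = q i) (hvp : ∀ i ∈ s, v i * star (v i) = p i) :
    ∑ i ∈ s, v i ∈ unitary R := by
  refine Unitary.mem_iff.mpr ⟨?_, ?_⟩
  · calc star (∑ i ∈ s, v i) * ∑ i ∈ s, v i = ∑ i ∈ s, ∑ j ∈ s, star (v i) * v j := by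
          rw [star_sum, sum_mul_sum]
      _ = ∑ i ∈ s, q i := sum_congr rfl fun i hi => by
          rw [sum_eq_single_of_mem i hi fun j hj hji => star_mul_eq_zero_of_mul_star_self_eq
            (hp.isStarProjection i hi) (hp.isStarProjection j hj) (hvp i hi) (hvp j hj)
            (hp.mul_eq_zero i hi j hj hji.symm), hvq i hi]
      _ = 1 := hq.sum_eq_one
  · calc (∑ i ∈ s, v i) * star (∑ i ∈ s, v i) = ∑ i ∈ s, ∑ j ∈ s, v i * star (v j) := by
          rw [star_sum, sum_mul_sum]
      _ = ∑ i ∈ s, p i := sum_congr rfl fun i hi => by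
          rw [sum_eq_single_of_mem i hi fun j hj hji => mul_star_eq_zero_of_star_mul_self_eq
            (hq.isStarProjection i hi) (hq.isStarProjection j hj) (hvq i hi) (hvq j hj)
            (hq.mul_eq_zero i hi j hj hji.symm), hvp i hi]
      _ = 1 := hp.sum_eq_one

theorem sum_mul_mul_star_sum (hq : IsResolutionOfIdentity s q)
    (hvq : ∀ i ∈ s, star (v i) * v i = q i) {m : ι} (hm : m ∈ s) :
    (∑ i ∈ s, v i) * q m * star (∑ i ∈ s, v i) = v m * star (v m) := by
  have hvm : (∑ i ∈ s, v i) * q m = v m := by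
    rw [sum_mul, sum_eq_single_of_mem m hm fun i hi him => ?_,
      mul_eq_self_of_star_mul_self_eq (hq.isStarProjection m hm) (hvq m hm)]
    rw [← mul_eq_self_of_star_mul_self_eq (hq.isStarProjection i hi) (hvq i hi), mul_assoc,
      hq.mul_eq_zero i hi m hm him, mul_zero]
  rw [hvm, star_sum, mul_sum, sum_eq_single_of_mem m hm fun i hi him =>
    mul_star_eq_zero_of_star_mul_self_eq (hq.isStarProjection m hm) (hq.isStarProjection i hi)
      (hvq m hm) (hvq i hi) (hq.mul_eq_zero m hm i hi him.symm)]

theorem sum_mul_sum_smul_mul_star_sum {𝕜 : Type*} [Semiring 𝕜] [Module 𝕜 R]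
    [IsScalarTower 𝕜 R R] [SMulCommClass 𝕜 R R] (hq : IsResolutionOfIdentity s q)
    (hvq : ∀ i ∈ s, star (v i) * v i = q i) (hvp : ∀ i ∈ s, v i * star (v i) = p i) (c : ι → 𝕜) :
    (∑ i ∈ s, v i) * (∑ i ∈ s, c i • q i) * star (∑ i ∈ s, v i) = ∑ i ∈ s, c i • p i := by
  rw [mul_sum, sum_mul]
  exact sum_congr rfl fun m hm => by
    rw [mul_smul_comm, smul_mul_assoc, sum_mul_mul_star_sum hq hvq hm, hvp m hm]

end IsResolutionOfIdentity

section SpectralProjection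

variable {A : Type*} [TopologicalSpace A] [Ring A] [StarRing A] [Algebra ℂ A]
  [ContinuousFunctionalCalculus ℂ A IsStarNormal]

noncomputable def spectralProj (a : A) (l : ℂ) : A := cfc (({l} : Set ℂ).indicator 1) a

variable {a : A} (hfin : (spectrum ℂ a).Finite)
include hfin

lemma isStarProjection_spectralProj [IsStarNormal a] (l : ℂ) :
    IsStarProjection (spectralProj a l) := by
  refine ⟨?_, ?_⟩
  · rw [IsIdempotentElem, spectralProj,
      ← cfc_mul _ _ a (hfin.continuousOn _) (hfin.continuousOn _)]
    refine cfc_congr fun z _ => ?_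
    by_cases h : z = l <;> simp [h]
  · rw [IsSelfAdjoint, spectralProj, ← cfc_star]
    refine cfc_congr fun z _ => ?_
    by_cases h : z = l <;> simp [h]

lemma spectralProj_mul_spectralProj_of_ne {l m : ℂ} (hlm : l ≠ m) :
    spectralProj a l * spectralProj a m = 0 := by
  rw [spectralProj, spectralProj, ← cfc_mul _ _ a (hfin.continuousOn _) (hfin.continuousOn _)]
  refine (cfc_congr fun z _ => ?_).trans (cfc_const_zero ℂ a)
  by_cases h : z = l <;> simp [h, hlm]

lemma spectralProj_ne_zero [IsStarNormal a] {l : ℂ} (hl : l ∈ spectrum ℂ a) :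
    spectralProj a l ≠ 0 := by
  intro h
  rw [spectralProj, ← cfc_const_zero ℂ a] at h
  simpa using eqOn_of_cfc_eq_cfc h (hfin.continuousOn _) (hfin.continuousOn _) ‹_› hl

omit hfin

lemma sum_spectralProj [IsStarNormal a] {s : Finset ℂ} (hs : (s : Set ℂ) = spectrum ℂ a) :
    ∑ l ∈ s, spectralProj a l = 1 := by
  have hfin : (spectrum ℂ a).Finite := hs ▸ s.finite_toSet
  simp only [spectralProj]
  rw [← cfc_sum _ a s fun _ _ => hfin.continuousOn _, ← cfc_const_one ℂ a]
  refine cfc_congr fun z hz => ?_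
  rw [← hs, Finset.mem_coe] at hz
  simp [hz]

lemma sum_smul_spectralProj [IsStarNormal a] {s : Finset ℂ} (hs : (s : Set ℂ) = spectrum ℂ a) :
    ∑ l ∈ s, l • spectralProj a l = a := by
  have hfin : (spectrum ℂ a).Finite := hs ▸ s.finite_toSet
  simp only [spectralProj, ← cfc_smul _ _ a (hfin.continuousOn _)]
  rw [← cfc_sum _ a s fun _ _ => hfin.continuousOn _]
  conv_rhs => rw [← cfc_id' ℂ a]
  refine cfc_congr fun z hz => ?_
  rw [← hs, Finset.mem_coe] at hz
  simp [Set.indicator_apply, hz]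

lemma isResolutionOfIdentity_spectralProj [IsStarNormal a] {s : Finset ℂ}
    (hs : (s : Set ℂ) = spectrum ℂ a) : IsResolutionOfIdentity s (spectralProj a) :=
  have hfin : (spectrum ℂ a).Finite := hs ▸ s.finite_toSet
  ⟨fun l _ => isStarProjection_spectralProj hfin l,
    fun _ _ _ _ hlm => spectralProj_mul_spectralProj_of_ne hfin hlm, sum_spectralProj hs⟩

end SpectralProjection

/-- In a unital C*-algebra in which any two nonzero projections are Murray-von Neumann
equivalent, two normal elements with the same finite spectrum are approximately unitarily
equivalent. -/
theorem stmt10 {A : Type*} [NormedRing A] [StarRing A] [CStarRing A] [CompleteSpace A]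
    [NormedAlgebra ℂ A] [StarModule ℂ A]
    (hproj : ∀ P Q : A, IsSelfAdjoint P → IsIdempotentElem P → P ≠ 0 →
      IsSelfAdjoint Q → IsIdempotentElem Q → Q ≠ 0 →
      ∃ v : A, star v * v = P ∧ v * star v = Q)
    (N₁ N₂ : A) (hN₁ : IsStarNormal N₁) (hN₂ : IsStarNormal N₂)
    (hfin : (spectrum ℂ N₁).Finite) (hspec : spectrum ℂ N₁ = spectrum ℂ N₂) :
    ∀ ε > (0 : ℝ), ∃ u ∈ unitary A, ‖N₁ - u * N₂ * star u‖ < ε := by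
  intro ε hε
  let _ : CStarAlgebra A := ⟨⟩
  set s := hfin.toFinset
  have hs₁ : (s : Set ℂ) = spectrum ℂ N₁ := hfin.coe_toFinset
  have hs₂ : (s : Set ℂ) = spectrum ℂ N₂ := hs₁.trans hspec
  have hP := isResolutionOfIdentity_spectralProj hs₁
  have hQ := isResolutionOfIdentity_spectralProj hs₂
  have hv : ∀ l ∈ s, ∃ v : A, star v * v = spectralProj N₂ l ∧ v * star v = spectralProj N₁ l :=
    fun l hl =>
    have hQl := hQ.isStarProjection l hl
    have hPl := hP.isStarProjection l hl
    hproj _ _ hQl.isSelfAdjoint hQl.isIdempotentElem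
      (spectralProj_ne_zero (hspec ▸ hfin) (hs₂ ▸ hl)) hPl.isSelfAdjoint hPl.isIdempotentElem
      (spectralProj_ne_zero hfin (hs₁ ▸ hl))
  choose! v hvQ hvP using hv
  refine ⟨∑ l ∈ s, v l, hP.sum_mem_unitary hQ hvQ hvP, ?_⟩
  rw [← sum_smul_spectralProj hs₂, hQ.sum_mul_sum_smul_mul_star_sum hvQ hvP,
    sum_smul_spectralProj hs₁, sub_self, norm_zero]
  exact hε
end

section
/- Let A be a unital C*-algebra and let N₁, N₂ ∈ A be normal elements with N₂ in the closure of the similarity orbit of N₁. Then spectrum(N₁) ⊆ spectrum(N₂). -/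
/-!
Conjugation by a unit preserves the spectrum, and `μ ∈ spectrum 𝕜 x` is a closed condition on `x`
because the units of a Banach algebra form an open set. Hence `spectrum N₁ ⊆ spectrum x` holds on
the whole similarity orbit of `N₁` and persists to its closure.
-/

open Set

namespace spectrum

variable {𝕜 A : Type*} [NormedField 𝕜] [NormedRing A] [NormedAlgebra 𝕜 A] [CompleteSpace A]

theorem isClosed_setOf_mem (μ : 𝕜) : IsClosed {a : A | μ ∈ spectrum 𝕜 a} :=
  nonunits.isClosed.preimage (continuous_const.sub continuous_id)

theorem isClosed_setOf_subset (s : Set 𝕜) : IsClosed {a : A | s ⊆ spectrum 𝕜 a} := by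
  simpa only [subset_def, ofPred_forall] using isClosed_biInter fun μ _ ↦ isClosed_setOf_mem μ

theorem subset_of_mem_closure_units_conjugates {a b : A}
    (h : b ∈ closure {x : A | ∃ u : Aˣ, x = ↑u * a * ↑u⁻¹}) :
    spectrum 𝕜 a ⊆ spectrum 𝕜 b :=
  closure_minimal (by rintro _ ⟨u, rfl⟩; exact units_conjugate.ge) (isClosed_setOf_subset _) h

end spectrum

theorem stmt11_general {A : Type*} [NormedRing A] [CompleteSpace A]
    [NormedAlgebra ℂ A]
    (N₁ N₂ : A)
    (h : N₂ ∈ closure {x : A | ∃ V : Aˣ, x = ↑V * N₁ * ↑V⁻¹}) :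
    spectrum ℂ N₁ ⊆ spectrum ℂ N₂ :=
  spectrum.subset_of_mem_closure_units_conjugates h

/-- If a normal element `N₂` lies in the norm closure of the similarity orbit of a normal
element `N₁` in a unital C*-algebra, then `spectrum N₁ ⊆ spectrum N₂`. -/
theorem stmt11 {A : Type*} [NormedRing A] [StarRing A] [CStarRing A] [CompleteSpace A]
    [NormedAlgebra ℂ A] [StarModule ℂ A]
    (N₁ N₂ : A) (hN₁ : IsStarNormal N₁) (hN₂ : IsStarNormal N₂)
    (h : N₂ ∈ closure {x : A | ∃ V : Aˣ, x = ↑V * N₁ * ↑V⁻¹}) :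
    spectrum ℂ N₁ ⊆ spectrum ℂ N₂ :=
  stmt11_general N₁ N₂ h
end

section
/- Let A be a unital C*-algebra and suppose a ∈ A is the norm limit of a sequence of nilpotent elements of A. Then 0 ∈ spectrum(a) and spectrum(a) is connected. -/
/-!
Nilpotents are not invertible and the non-units form a closed set, so `0 ∈ σ(a)`. If `σ(a)` were
disconnected, a piece `L` of it avoiding `0` could be enclosed in a bounded open set `U` with
`0 ∉ closure U` and `frontier U ∩ σ(a) = ∅`. The resolvent of `a` is bounded by some `M` on the
compact set `frontier U`, hence that of a nilpotent `b` with `‖b - a‖ < 1 / (2M)` is bounded by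
`2M` there. As `σ(b) = {0}`, the resolvent of `b` is holomorphic near `closure U`, and the maximum
modulus principle bounds it by `2M` on `L`; but then `λ - a` is invertible for `λ ∈ L`.
-/

open Set Metric Bornology Filter

theorem IsCompact.isPreconnected_of_forall_disjoint {X : Type*} [TopologicalSpace X]
    [T2Space X] [LocallyCompactSpace X] {S : Set X} (hS : IsCompact S) {x₀ : X}
    (hx₀ : x₀ ∈ S)
    (h : ∀ U : Set X, IsOpen U → IsCompact (closure U) → x₀ ∉ closure U →
      Disjoint (frontier U) S → Disjoint U S) :
    IsPreconnected S := by
  rw [isPreconnected_iff_subset_of_fully_disjoint_closed hS.isClosed]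
  intro K L hK hL hcover hKL
  wlog hx₀K : x₀ ∈ K generalizing K L
  · exact (this L K hL hK (union_comm K L ▸ hcover) hKL.symm
      ((hcover hx₀).resolve_left hx₀K)).symm
  left
  obtain ⟨U, hUo, hLU, hUK, hUc⟩ := exists_open_between_and_isCompact_closure
    (hS.inter_right hL) hK.isOpen_compl (fun z hz => disjoint_right.mp hKL hz.2)
  have hfr : Disjoint (frontier U) S := by
    refine disjoint_left.mpr fun z hzU hzS => ?_
    have hzL : z ∈ L := (hcover hzS).resolve_left (hUK hzU.1)
    exact hzU.2 (hUo.interior_eq.symm ▸ hLU ⟨hzS, hzL⟩)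
  have hUS := h U hUo hUc (fun h0 => hUK h0 hx₀K) hfr
  intro z hzS
  exact (hcover hzS).resolve_right fun hzL => disjoint_left.mp hUS (hLU ⟨hzS, hzL⟩) hzS

theorem spectrum.subset_singleton_zero_of_isNilpotent {R A : Type*} [Field R] [Ring A]
    [Algebra R A] {b : A} (hb : IsNilpotent b) : spectrum R b ⊆ {0} := by
  intro z hz
  by_contra hz0
  refine hz (spectrum.mem_resolventSet_iff.mpr ?_)
  simpa [sub_eq_add_neg] using hb.neg.isUnit_add_left_of_commute
    ((isUnit_iff_ne_zero.mpr hz0).map (algebraMap R A)) (Algebra.commutes z (-b)).symm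

theorem not_isUnit_of_mem_closure_isNilpotent {R : Type*} [NormedRing R]
    [HasSummableGeomSeries R] [Nontrivial R] {a : R}
    (ha : a ∈ closure {b : R | IsNilpotent b}) : ¬IsUnit a :=
  closure_minimal (fun _ hb => hb.not_isUnit) nonunits.isClosed ha

theorem IsUnit.of_norm_sub_mul_norm_inverse_lt {R : Type*} [NormedRing R]
    [HasSummableGeomSeries R] {x y : R} (hx : IsUnit x)
    (h : ‖y - x‖ * ‖Ring.inverse x‖ < 1) : IsUnit y := by
  obtain ⟨u, rfl⟩ := hx
  rw [Ring.inverse_unit] at h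
  have hsmall : ‖-((↑u⁻¹ : R) * (y - u))‖ < 1 := by
    rw [norm_neg]
    exact (norm_mul_le _ _).trans_lt (mul_comm ‖y - u‖ _ ▸ h)
  have hy : y = u * (1 - -((↑u⁻¹ : R) * (y - u))) := by
    rw [sub_neg_eq_add, mul_add, mul_one, ← mul_assoc, Units.mul_inv, one_mul, add_sub_cancel]
  rw [hy]
  exact u.isUnit.mul (Units.oneSub _ hsmall).isUnit

theorem IsUnit.norm_inverse_le_two_mul {R : Type*} [NormedRing R] {x y : R} (hx : IsUnit x)
    (hy : IsUnit y) (h : ‖Ring.inverse x‖ * ‖y - x‖ ≤ 1 / 2) :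
    ‖Ring.inverse y‖ ≤ 2 * ‖Ring.inverse x‖ := by
  set x' := Ring.inverse x
  set y' := Ring.inverse y
  have hid : y' = x' - x' * (y - x) * y' := by
    rw [mul_sub, sub_mul, Ring.inverse_mul_cancel x hx, one_mul, mul_assoc,
      Ring.mul_inverse_cancel y hy, mul_one, sub_sub_cancel]
  have hle : ‖y'‖ ≤ ‖x'‖ + ‖x'‖ * ‖y - x‖ * ‖y'‖ :=
    calc ‖y'‖ = ‖x' - x' * (y - x) * y'‖ := congrArg norm hid
      _ ≤ ‖x'‖ + ‖x' * (y - x) * y'‖ := norm_sub_le _ _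
      _ ≤ ‖x'‖ + ‖x'‖ * ‖y - x‖ * ‖y'‖ := by gcongr; exact norm_mul₃_le
  nlinarith [norm_nonneg y']

theorem spectrum.disjoint_of_mem_closure {A : Type*} [NormedRing A] [NormedAlgebra ℂ A]
    [CompleteSpace A] {a : A} {U : Set ℂ} (hU : IsBounded U)
    (hfr : Disjoint (frontier U) (spectrum ℂ a))
    (ha : a ∈ closure {b : A | Disjoint (closure U) (spectrum ℂ b)}) :
    Disjoint U (spectrum ℂ a) := by
  have hres_a : ∀ z ∈ frontier U, z ∈ resolventSet ℂ a := fun z hz =>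
    spectrum.notMem_iff.mp (disjoint_left.mp hfr hz)
  obtain ⟨M, hM⟩ := (hU.isCompact_closure.of_isClosed_subset isClosed_frontier
    frontier_subset_closure).exists_bound_of_continuousOn fun z hz =>
      (spectrum.hasDerivAt_resolvent_const_left (hres_a z hz)).continuousAt.continuousWithinAt
  set M' := max M 1
  have hM' : 0 < M' := zero_lt_one.trans_le (le_max_right _ _)
  obtain ⟨b, hbU, hab⟩ := Metric.mem_closure_iff.mp ha (2 * M')⁻¹ (by positivity)
  have hres_b : ∀ z ∈ closure U, z ∈ resolventSet ℂ b := fun z hz =>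
    spectrum.notMem_iff.mp (disjoint_left.mp hbU hz)
  have hbound : ∀ z ∈ frontier U, ‖resolvent b z‖ ≤ 2 * M' := by
    intro z hz
    have hRa : ‖resolvent a z‖ ≤ M' := (hM z hz).trans (le_max_left _ _)
    have hsmall :
        ‖resolvent a z‖ * ‖(algebraMap ℂ A z - b) - (algebraMap ℂ A z - a)‖ ≤ 1 / 2 := by
      rw [sub_sub_sub_cancel_left, ← dist_eq_norm]
      calc ‖resolvent a z‖ * dist a b ≤ M' * (2 * M')⁻¹ := by gcongr
        _ = 1 / 2 := by field_simp
    calc ‖resolvent b z‖ ≤ 2 * ‖resolvent a z‖ :=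
          (hres_a z hz).norm_inverse_le_two_mul (hres_b z (frontier_subset_closure hz)) hsmall
      _ ≤ 2 * M' := by gcongr
  have hdiff : DiffContOnCl ℂ (resolvent b) U :=
    DifferentiableOn.diffContOnCl fun z hz =>
      (spectrum.hasDerivAt_resolvent_const_left (hres_b z hz)).differentiableAt
        |>.differentiableWithinAt
  refine disjoint_left.mpr fun z hzU hza => hza ?_
  have hRb : ‖resolvent b z‖ ≤ 2 * M' :=
    Complex.norm_le_of_forall_mem_frontier_norm_le hU hdiff hbound (subset_closure hzU)
  refine (hres_b z (subset_closure hzU)).of_norm_sub_mul_norm_inverse_lt ?_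
  rw [sub_sub_sub_cancel_left, ← dist_eq_norm]
  calc dist b a * ‖resolvent b z‖ ≤ dist b a * (2 * M') := by gcongr
    _ < (2 * M')⁻¹ * (2 * M') := by rw [dist_comm]; gcongr
    _ = 1 := by field_simp

theorem stmt17_general {A : Type*} [NormedRing A] [CompleteSpace A]
    [NormedAlgebra ℂ A] [Nontrivial A]
    (a : A) (Q : ℕ → A) (hQ : ∀ n, ∃ m : ℕ, 1 ≤ m ∧ Q n ^ m = 0)
    (h : Filter.Tendsto Q Filter.atTop (nhds a)) :
    0 ∈ spectrum ℂ a ∧ IsConnected (spectrum ℂ a) := by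
  have ha : a ∈ closure {b : A | IsNilpotent b} :=
    mem_closure_of_tendsto h (Eventually.of_forall fun n => (hQ n).imp fun _ hm => hm.2)
  have h0 : (0 : ℂ) ∈ spectrum ℂ a :=
    (spectrum.zero_mem_iff ℂ).mpr (not_isUnit_of_mem_closure_isNilpotent ha)
  refine ⟨h0, ⟨0, h0⟩, (spectrum.isCompact a).isPreconnected_of_forall_disjoint h0
    fun U _ hUc h0U hfr => ?_⟩
  refine spectrum.disjoint_of_mem_closure (hUc.isBounded.subset subset_closure) hfr
    (closure_mono (fun b hb => ?_) ha)
  exact (disjoint_singleton_right.mpr h0U).mono_right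
    (spectrum.subset_singleton_zero_of_isNilpotent hb)

/-- If `a` is the norm limit of a sequence of nilpotent elements of a unital C*-algebra,
then `0 ∈ spectrum a` and the spectrum of `a` is connected. -/
theorem stmt17 {A : Type*} [NormedRing A] [StarRing A] [CStarRing A] [CompleteSpace A]
    [NormedAlgebra ℂ A] [StarModule ℂ A] [Nontrivial A]
    (a : A) (Q : ℕ → A) (hQ : ∀ n, ∃ m : ℕ, 1 ≤ m ∧ Q n ^ m = 0)
    (h : Filter.Tendsto Q Filter.atTop (nhds a)) :
    0 ∈ spectrum ℂ a ∧ IsConnected (spectrum ℂ a) :=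
  stmt17_general a Q hQ h
end
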